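/- For the two-qubit state ω(θ) = (1/2)[[sin²θ, 0, 0, (1/√2)sin θ],[0, 1/2, (1/√2)cos θ, 0],[0, (1/√2)cos θ, cos²θ, 0],[(1/√2)sin θ, 0, 0, 1/2]], the negativity equals Neg(ω(θ)) = (1/4)|cos 2θ|. -/

import Mathlib

/-!
Listing the basis as `(|00⟩, |11⟩) ⊕ (|01⟩, |10⟩)` makes `ω(θ)^{T_A}` block diagonal. From trace
and determinant, the two `2 × 2` blocks have eigenvalues `1/2, -cos 2θ / 4` and `1/2, cos 2θ / 4`,
so `‖ω(θ)^{T_A}‖₁ = 1 + |cos 2θ| / 2`.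
-/

open Matrix

noncomputable section

def idx (i k : Fin 2) : Fin 4 := ⟨2 * i.1 + k.1, by omega⟩

/-- `ω(θ)`: the Choi state of the single-qubit selfcomplementary channel with `φ = 0`. -/
def omg (θ : ℝ) : Matrix (Fin 2 × Fin 2) (Fin 2 × Fin 2) ℂ :=
  Matrix.of fun p q =>
    ((1 / 2 : ℂ) •
      !![(Real.sin θ : ℂ) ^ 2, 0, 0, (((Real.sqrt 2)⁻¹ * Real.sin θ : ℝ) : ℂ);
         0, 1 / 2, (((Real.sqrt 2)⁻¹ * Real.cos θ : ℝ) : ℂ), 0;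
         0, (((Real.sqrt 2)⁻¹ * Real.cos θ : ℝ) : ℂ), (Real.cos θ : ℂ) ^ 2, 0;
         (((Real.sqrt 2)⁻¹ * Real.sin θ : ℝ) : ℂ), 0, 0, 1 / 2])
      (idx p.1 p.2) (idx q.1 q.2)

/-- Partial transpose on the first factor: `(ω^{T_A})_{(i,k),(j,l)} = ω_{(j,k),(i,l)}`. -/
def ptA (ω : Matrix (Fin 2 × Fin 2) (Fin 2 × Fin 2) ℂ) :
    Matrix (Fin 2 × Fin 2) (Fin 2 × Fin 2) ℂ :=
  Matrix.of fun p q => ω (q.1, p.2) (p.1, q.2)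

/-- Trace norm of a Hermitian matrix: the sum of the absolute values of its eigenvalues
(junk value 0 for non-Hermitian matrices). -/
def traceNorm {n : Type*} [Fintype n] [DecidableEq n] (A : Matrix n n ℂ) : ℝ :=
  if h : A.IsHermitian then ∑ i, |h.eigenvalues i| else 0

/-- Negativity `Neg(ω) = (‖ω^{T_A}‖₁ − 1)/2`. -/
def negativity (ω : Matrix (Fin 2 × Fin 2) (Fin 2 × Fin 2) ℂ) : ℝ :=
  (traceNorm (ptA ω) - 1) / 2

open Polynomial

theorem Matrix.IsHermitian.map_eigenvalues_eq_of_charpoly_eq {n : Type*} [Fintype n]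
    [DecidableEq n] {A : Matrix n n ℂ} (hA : A.IsHermitian) {s : Multiset ℝ}
    (h : A.charpoly = (s.map fun x : ℝ => X - C (x : ℂ)).prod) :
    Finset.univ.val.map hA.eigenvalues = s := by
  refine Multiset.map_injective Complex.ofReal_injective ?_
  have hprod : (s.map fun x : ℝ => X - C (x : ℂ)) = (s.map Complex.ofReal).map (X - C ·) :=
    (Multiset.map_map (X - C ·) Complex.ofReal s).symm
  have hroots := hA.roots_charpoly_eq_eigenvalues
  rw [h, hprod, roots_multiset_prod_X_sub_C] at hroots
  rw [hroots, Multiset.map_map]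
  rfl

theorem traceNorm_eq_of_charpoly_eq {n : Type*} [Fintype n] [DecidableEq n]
    {A : Matrix n n ℂ} (hA : A.IsHermitian) {s : Multiset ℝ}
    (h : A.charpoly = (s.map fun x : ℝ => X - C (x : ℂ)).prod) :
    traceNorm A = (s.map abs).sum := by
  rw [traceNorm, dif_pos hA, ← hA.map_eigenvalues_eq_of_charpoly_eq h, Multiset.map_map]
  rfl

theorem Matrix.charpoly_fin_two_eq_of_trace_det {R : Type*} [CommRing R] [Nontrivial R]
    (M : Matrix (Fin 2) (Fin 2) R) {a b : R} (htr : M.trace = a + b) (hdet : M.det = a * b) :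
    M.charpoly = (X - C a) * (X - C b) := by
  rw [charpoly_fin_two, htr, hdet, C_add, C_mul]
  ring

theorem isHermitian_ptA_omg (θ : ℝ) : (ptA (omg θ)).IsHermitian := by
  ext ⟨i, k⟩ ⟨j, l⟩
  fin_cases i <;> fin_cases k <;> fin_cases j <;> fin_cases l <;>
    simp [ptA, omg, idx, -Complex.ofReal_sin, -Complex.ofReal_cos, ← Complex.ofReal_pow]

/-- The partial transpose of `omg θ` only couples `|00⟩` with `|11⟩` and `|01⟩` with `|10⟩`. -/
def sectorEquiv : Fin 2 × Fin 2 ≃ Fin 2 ⊕ Fin 2 where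
  toFun p := if p.1 = p.2 then .inl p.1 else .inr p.1
  invFun := Sum.elim (fun i => (i, i)) (fun i => (i, 1 - i))
  left_inv := by decide
  right_inv := by decide

def ptAOmgDiagBlock (θ : ℝ) : Matrix (Fin 2) (Fin 2) ℂ :=
  (1 / 2 : ℂ) • !![(Real.sin θ : ℂ) ^ 2, (((Real.sqrt 2)⁻¹ * Real.cos θ : ℝ) : ℂ);
    (((Real.sqrt 2)⁻¹ * Real.cos θ : ℝ) : ℂ), 1 / 2]

def ptAOmgOffDiagBlock (θ : ℝ) : Matrix (Fin 2) (Fin 2) ℂ :=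
  (1 / 2 : ℂ) • !![1 / 2, (((Real.sqrt 2)⁻¹ * Real.sin θ : ℝ) : ℂ);
    (((Real.sqrt 2)⁻¹ * Real.sin θ : ℝ) : ℂ), (Real.cos θ : ℂ) ^ 2]

theorem reindex_ptA_omg (θ : ℝ) :
    reindex sectorEquiv sectorEquiv (ptA (omg θ)) =
      fromBlocks (ptAOmgDiagBlock θ) 0 0 (ptAOmgOffDiagBlock θ) := by
  ext (i | i) (j | j) <;> fin_cases i <;> fin_cases j <;>
    simp [ptA, omg, idx, sectorEquiv, ptAOmgDiagBlock, ptAOmgOffDiagBlock]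

theorem inv_ofReal_sqrt_two_sq : ((Real.sqrt 2 : ℝ) : ℂ)⁻¹ ^ 2 = 1 / 2 := by
  rw [inv_pow, ← Complex.ofReal_pow, Real.sq_sqrt zero_le_two, one_div, Complex.ofReal_ofNat]

theorem charpoly_ptAOmgDiagBlock (θ : ℝ) :
    (ptAOmgDiagBlock θ).charpoly =
      (X - C ((1 / 2 : ℝ) : ℂ)) * (X - C ((-Real.cos (2 * θ) / 4 : ℝ) : ℂ)) := by
  have hpyth := Complex.cos_sq_add_sin_sq θ
  have hcos2 := Complex.cos_two_mul θ
  apply charpoly_fin_two_eq_of_trace_det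
  · simp [ptAOmgDiagBlock, trace_fin_two]
    linear_combination (1 / 2 : ℂ) * hpyth + hcos2 / 4
  · simp [ptAOmgDiagBlock, det_fin_two]
    linear_combination (-Complex.cos θ ^ 2 / 4) * inv_ofReal_sqrt_two_sq + hpyth / 8 + hcos2 / 8

theorem charpoly_ptAOmgOffDiagBlock (θ : ℝ) :
    (ptAOmgOffDiagBlock θ).charpoly =
      (X - C ((1 / 2 : ℝ) : ℂ)) * (X - C ((Real.cos (2 * θ) / 4 : ℝ) : ℂ)) := by
  have hpyth := Complex.cos_sq_add_sin_sq θ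
  have hcos2 := Complex.cos_two_mul θ
  apply charpoly_fin_two_eq_of_trace_det
  · simp [ptAOmgOffDiagBlock, trace_fin_two]
    linear_combination -hcos2 / 4
  · simp [ptAOmgOffDiagBlock, det_fin_two]
    linear_combination (-Complex.sin θ ^ 2 / 4) * inv_ofReal_sqrt_two_sq - hpyth / 8 - hcos2 / 8

theorem charpoly_ptA_omg (θ : ℝ) :
    (ptA (omg θ)).charpoly =
      (({1 / 2, -Real.cos (2 * θ) / 4, 1 / 2, Real.cos (2 * θ) / 4} : Multiset ℝ).map
        fun x : ℝ => X - C (x : ℂ)).prod := by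
  rw [← charpoly_reindex sectorEquiv, reindex_ptA_omg, charpoly_fromBlocks_zero₁₂,
    charpoly_ptAOmgDiagBlock, charpoly_ptAOmgOffDiagBlock]
  simp [mul_assoc]

theorem negativity_of_choi (θ : ℝ) :
    negativity (omg θ) = (1 / 4) * |Real.cos (2 * θ)| := by
  rw [negativity, traceNorm_eq_of_charpoly_eq (isHermitian_ptA_omg θ) (charpoly_ptA_omg θ)]
  simp only [Multiset.insert_eq_cons, Multiset.map_cons, Multiset.map_singleton,
    Multiset.sum_cons, Multiset.sum_singleton, abs_neg, abs_div, one_div, abs_inv, Nat.abs_ofNat]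
  ring

end
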